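/- For every n ≥ 1, the number of permutations of {1,…,n} avoiding the pattern 132 equals the number of permutations of {1,…,n} avoiding the pattern 123. -/
import Mathlib


/-- `π` contains the pattern `τ` if there is a strictly increasing sequence of indices
along which the values of `π` are in the same relative order as the values of `τ`. -/
def Contains {n m : ℕ} (π : Equiv.Perm (Fin n)) (τ : Equiv.Perm (Fin m)) : Prop :=
  ∃ f : Fin m → Fin n, StrictMono f ∧ ∀ s t : Fin m, π (f s) < π (f t) ↔ τ s < τ t

set_option linter.unusedTactic false
set_option linter.unreachableTactic false
set_option linter.unnecessarySeqFocus false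
set_option linter.unusedSectionVars false


variable {n : ℕ}

noncomputable def pminN [NeZero n] (π : Equiv.Perm (Fin n)) (i : ℕ) : Fin n :=
  ((Finset.univ.filter (fun j : Fin n => (j : ℕ) ≤ i)).image π).min'
    (Finset.Nonempty.image ⟨⟨0, Nat.pos_of_ne_zero (NeZero.ne n)⟩, by simp⟩ π)

variable [NeZero n] (π : Equiv.Perm (Fin n))

lemma pminN_le {i : ℕ} {j : Fin n} (hj : (j : ℕ) ≤ i) : pminN π i ≤ π j :=
  Finset.min'_le _ _ (Finset.mem_image_of_mem _ (by simp [hj]))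

lemma exists_pminN (i : ℕ) : ∃ j : Fin n, (j : ℕ) ≤ i ∧ π j = pminN π i := by
  have h := Finset.min'_mem ((Finset.univ.filter (fun j : Fin n => (j : ℕ) ≤ i)).image π)
    (Finset.Nonempty.image ⟨⟨0, Nat.pos_of_ne_zero (NeZero.ne n)⟩, by simp⟩ π)
  rw [Finset.mem_image] at h
  obtain ⟨j, hj, hje⟩ := h
  exact ⟨j, by simpa using hj, hje⟩

lemma pminN_anti {i k : ℕ} (h : i ≤ k) : pminN π k ≤ pminN π i := by
  obtain ⟨j, hj, hje⟩ := exists_pminN π i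
  calc pminN π k ≤ π j := pminN_le π (hj.trans h)
  _ = pminN π i := hje

lemma pminN_zero : pminN π 0 = π ⟨0, Nat.pos_of_ne_zero (NeZero.ne n)⟩ := by
  refine le_antisymm (pminN_le π (by simp)) ?_
  obtain ⟨j, hj, hje⟩ := exists_pminN π 0
  have : j = ⟨0, Nat.pos_of_ne_zero (NeZero.ne n)⟩ := by
    ext; simpa using hj
  rw [← hje, this]

lemma pminN_succ {i : ℕ} (h0 : 0 < i) (hi : i < n) :
    pminN π i = min (pminN π (i-1)) (π ⟨i, hi⟩) := by
  refine le_antisymm (le_min (pminN_anti π (by omega)) (pminN_le π (le_refl _))) ?_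
  obtain ⟨j, hj, hje⟩ := exists_pminN π i
  rw [← hje]
  rcases Nat.lt_or_ge (j : ℕ) i with h | h
  · exact (min_le_left _ _).trans (pminN_le π (by omega))
  · have hji : (j:ℕ) = i := le_antisymm hj h
    have : j = ⟨i, hi⟩ := by ext; simp [hji]
    rw [this]; exact min_le_right _ _

lemma pminN_stab {i : ℕ} (h : n - 1 ≤ i) : pminN π i = pminN π (n-1) := by
  unfold pminN
  congr 2
  ext j
  simp only [Finset.mem_filter, Finset.mem_univ, true_and]
  omega


variable {n : ℕ}

section Build

variable (μ : ℕ → Fin n) (pick : Finset (Fin n) → Fin n)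

def avail (i : ℕ) (l : List (Fin n)) : Finset (Fin n) :=
  (Finset.univ.filter (fun v => μ i < v)) \ l.toFinset

def step (i : ℕ) (l : List (Fin n)) : Fin n :=
  if i = 0 then μ 0 else if μ i < μ (i-1) then μ i else pick (avail μ i l)

def buildL : ℕ → List (Fin n)
  | 0 => []
  | (i+1) => buildL i ++ [step μ pick i (buildL i)]

def gf (i : ℕ) : Fin n := step μ pick i (buildL μ pick i)

lemma buildL_eq (i : ℕ) : buildL μ pick i = (List.range i).map (gf μ pick) := by
  induction i with
  | zero => rfl
  | succ i ih => rw [buildL, List.range_succ, List.map_append]; simp [gf, ih]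

lemma mem_buildL {v : Fin n} {i : ℕ} :
    v ∈ (buildL μ pick i).toFinset ↔ ∃ j, j < i ∧ gf μ pick j = v := by
  simp [buildL_eq, List.mem_map]

variable (hA : ∀ ⦃i j : ℕ⦄, i ≤ j → j < n → μ j ≤ μ i)
  (hC : ∀ i, i < n → i ≤ (Finset.univ.filter (fun v : Fin n => μ i < v)).card)
  (hpick : ∀ S : Finset (Fin n), S.Nonempty → pick S ∈ S)

include hA hC hpick in
lemma main_inv : ∀ i, i < n →
    (μ i ≤ gf μ pick i) ∧ (∀ j, j < i → gf μ pick j ≠ gf μ pick i) ∧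
    (∃ j, j ≤ i ∧ gf μ pick j = μ i) := by
  intro i
  induction i using Nat.strong_induction_on with
  | _ i IH =>
  intro hi
  by_cases h0 : i = 0
  · subst h0
    have hg : gf μ pick 0 = μ 0 := by simp [gf, step]
    exact ⟨le_of_eq hg.symm, fun j hj => absurd hj (by omega), ⟨0, le_refl _, hg⟩⟩
  · have hi1 : i - 1 < i := by omega
    by_cases hd : μ i < μ (i-1)
    · have hg : gf μ pick i = μ i := by simp [gf, step, h0, hd]
      refine ⟨le_of_eq hg.symm, fun j hj => ?_, ⟨i, le_refl _, hg⟩⟩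
      have h1 : μ j ≤ gf μ pick j := (IH j hj (by omega)).1
      have h2 : μ (i-1) ≤ μ j := hA (by omega) (by omega)
      rw [hg]
      exact ne_of_gt (lt_of_lt_of_le (lt_of_lt_of_le hd h2) h1)
    · have heq : μ i = μ (i-1) := le_antisymm (hA (by omega) hi) (not_lt.mp hd)
      set used := (buildL μ pick i).toFinset with hused
      set T := (Finset.univ.filter (fun v : Fin n => μ i < v)) with hT
      have husedcard : used.card ≤ i := by
        rw [hused, buildL_eq]
        exact (List.toFinset_card_le _).trans (by simp)
      have hmem : μ i ∈ used := by
        obtain ⟨j, hj, hje⟩ := (IH (i-1) hi1 (by omega)).2.2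
        rw [hused, mem_buildL]
        exact ⟨j, by omega, by rw [hje, heq]⟩
      have hne : (avail μ i (buildL μ pick i)).Nonempty := by
        have h1 : avail μ i (buildL μ pick i) = T \ used.erase (μ i) := by
          rw [avail, ← hused, ← hT]
          ext v
          simp only [Finset.mem_sdiff, Finset.mem_erase, hT, Finset.mem_filter,
            Finset.mem_univ, true_and]
          constructor
          · rintro ⟨h1, h2⟩; exact ⟨h1, fun ⟨_, hv⟩ => h2 hv⟩
          · rintro ⟨h1, h2⟩; exact ⟨h1, fun hv => h2 ⟨ne_of_gt h1, hv⟩⟩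
        rw [h1, ← Finset.card_pos]
        have hc1 : (used.erase (μ i)).card = used.card - 1 := Finset.card_erase_of_mem hmem
        have hc2 : T.card ≤ (T \ used.erase (μ i)).card + (used.erase (μ i)).card :=
          Finset.card_le_card_sdiff_add_card
        have hc3 := hC i hi
        rw [← hT] at hc3
        omega
      have hg : gf μ pick i = pick (avail μ i (buildL μ pick i)) := by
        simp [gf, step, h0, hd]
      have hp := hpick _ hne
      rw [← hg, avail, Finset.mem_sdiff, Finset.mem_filter] at hp
      refine ⟨le_of_lt hp.1.2, fun j hj hje => ?_, ?_⟩
      · exact hp.2 (mem_buildL _ _ |>.mpr ⟨j, hj, hje⟩)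
      · obtain ⟨j, hj, hje⟩ := (IH (i-1) hi1 (by omega)).2.2
        exact ⟨j, by omega, by rw [hje, heq]⟩

end Build


variable {n : ℕ}

section Rel

variable (μ : ℕ → Fin n) (pick : Finset (Fin n) → Fin n)
  (r : Fin n → Fin n → Prop)
  (hA : ∀ ⦃i j : ℕ⦄, i ≤ j → j < n → μ j ≤ μ i)
  (hC : ∀ i, i < n → i ≤ (Finset.univ.filter (fun v : Fin n => μ i < v)).card)
  (hpick : ∀ S : Finset (Fin n), S.Nonempty → pick S ∈ S)
  (hext : ∀ S : Finset (Fin n), ∀ v ∈ S, r (pick S) v)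

include hA hC hpick in
lemma gf_inj : ∀ ⦃i j : ℕ⦄, i < n → j < n → gf μ pick i = gf μ pick j → i = j := by
  intro i j hi hj he
  rcases Nat.lt_trichotomy i j with h | h | h
  · exact absurd he ((main_inv μ pick hA hC hpick j hj).2.1 i h)
  · exact h
  · exact absurd he.symm ((main_inv μ pick hA hC hpick i hi).2.1 j h)

include hA hC hpick hext in
lemma rel_of {a b c : ℕ} (hab : a < b) (hbc : b < c) (hc : c < n)
    (h1 : gf μ pick a < gf μ pick b) (h2 : gf μ pick a < gf μ pick c) :
    r (gf μ pick b) (gf μ pick c) := by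
  have hb : b < n := by omega
  have ha : a < n := by omega
  have h0 : b ≠ 0 := by omega
  have hμa : μ a ≤ gf μ pick a := (main_inv μ pick hA hC hpick a ha).1
  by_cases hd : μ b < μ (b-1)
  · exfalso
    have hg : gf μ pick b = μ b := by simp [gf, step, h0, hd]
    have : μ b ≤ μ a := hA hab.le hb
    exact absurd h1 (not_lt.mpr (hg ▸ (this.trans hμa)))
  · have hg : gf μ pick b = pick (avail μ b (buildL μ pick b)) := by
      simp [gf, step, h0, hd]
    have hmem : gf μ pick c ∈ avail μ b (buildL μ pick b) := by
      rw [avail, Finset.mem_sdiff, Finset.mem_filter]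
      refine ⟨⟨Finset.mem_univ _, ?_⟩, ?_⟩
      · exact lt_of_le_of_lt ((hA hab.le hb).trans hμa) h2
      · rw [mem_buildL]
        rintro ⟨j, hj, hje⟩
        have := gf_inj μ pick hA hC hpick (by omega : j < n) hc hje
        omega
    rw [hg]
    exact hext _ _ hmem

end Rel

variable {n : ℕ}

lemma strictMono_vec3 {a b c : Fin n} (hab : a < b) (hbc : b < c) :
    StrictMono ![a, b, c] := by
  intro s t hst
  fin_cases s <;> fin_cases t <;>
    simp_all [Matrix.cons_val_zero, Matrix.cons_val_one, Matrix.head_cons] <;>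
    first
      | exact hab | exact hbc | exact hab.trans hbc
      | exact absurd hst (by decide) | exact absurd hst (by omega)

lemma contains_of_132 (π : Equiv.Perm (Fin n)) {a b c : Fin n} (hab : a < b) (hbc : b < c)
    (h1 : π a < π c) (h2 : π c < π b) : Contains π (Equiv.swap (1 : Fin 3) 2) := by
  refine ⟨![a, b, c], strictMono_vec3 hab hbc, fun s t => ?_⟩
  have e0 : Equiv.swap (1 : Fin 3) 2 0 = 0 := by decide
  have e1 : Equiv.swap (1 : Fin 3) 2 1 = 2 := by decide
  have e2 : Equiv.swap (1 : Fin 3) 2 2 = 1 := by decide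
  have h3 : π a < π b := h1.trans h2
  fin_cases s <;> fin_cases t <;>
    simp [e0, e1, e2, h1, h2, h3, lt_irrefl, not_lt.mpr h1.le, not_lt.mpr h2.le,
      not_lt.mpr h3.le, Fin.lt_def]

lemma contains_of_123 (π : Equiv.Perm (Fin n)) {a b c : Fin n} (hab : a < b) (hbc : b < c)
    (h1 : π a < π b) (h2 : π b < π c) : Contains π (1 : Equiv.Perm (Fin 3)) := by
  refine ⟨![a, b, c], strictMono_vec3 hab hbc, fun s t => ?_⟩
  have h3 : π a < π c := h1.trans h2
  fin_cases s <;> fin_cases t <;>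
    simp [h1, h2, h3, lt_irrefl, not_lt.mpr h1.le, not_lt.mpr h2.le,
      not_lt.mpr h3.le, Fin.lt_def]

lemma triple_of_contains_132 {π : Equiv.Perm (Fin n)}
    (h : Contains π (Equiv.swap (1 : Fin 3) 2)) :
    ∃ a b c : Fin n, a < b ∧ b < c ∧ π a < π c ∧ π c < π b := by
  obtain ⟨f, hf, hval⟩ := h
  refine ⟨f 0, f 1, f 2, hf (by decide), hf (by decide), ?_, ?_⟩
  · exact (hval 0 2).mpr (by decide)
  · exact (hval 2 1).mpr (by decide)

lemma triple_of_contains_123 {π : Equiv.Perm (Fin n)}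
    (h : Contains π (1 : Equiv.Perm (Fin 3))) :
    ∃ a b c : Fin n, a < b ∧ b < c ∧ π a < π b ∧ π b < π c := by
  obtain ⟨f, hf, hval⟩ := h
  exact ⟨f 0, f 1, f 2, hf (by decide), hf (by decide),
    (hval 0 1).mpr (by decide), (hval 1 2).mpr (by decide)⟩


variable {n : ℕ}

section Inst

variable [NeZero n] (σ : Equiv.Perm (Fin n))

lemma pminN_hA : ∀ ⦃i j : ℕ⦄, i ≤ j → j < n → pminN σ j ≤ pminN σ i :=
  fun _ _ h _ => pminN_anti σ h

lemma pminN_hC : ∀ i, i < n →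
    i ≤ (Finset.univ.filter (fun v : Fin n => pminN σ i < v)).card := by
  intro i hi
  set m := pminN σ i with hm
  set S := (Finset.univ.filter (fun j : Fin n => (j : ℕ) ≤ i)).image σ with hS
  have hfil : (Finset.univ.filter (fun j : Fin n => (j : ℕ) ≤ i)) = Finset.Iic ⟨i, hi⟩ := by
    ext j; simp [Fin.le_def]
  have hcardS : S.card = i + 1 := by
    rw [hS, Finset.card_image_of_injective _ σ.injective, hfil, Fin.card_Iic]
  have hmS : m ∈ S := by
    obtain ⟨j, hj, hje⟩ := exists_pminN σ i
    rw [hS, Finset.mem_image]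
    exact ⟨j, by simp [hj], hje⟩
  have hsub : S.erase m ⊆ Finset.univ.filter (fun v : Fin n => m < v) := by
    intro v hv
    rw [Finset.mem_erase] at hv
    obtain ⟨hne, hvS⟩ := hv
    rw [hS, Finset.mem_image] at hvS
    obtain ⟨j, hj, hje⟩ := hvS
    simp only [Finset.mem_filter, Finset.mem_univ, true_and] at hj ⊢
    exact lt_of_le_of_ne (hje ▸ pminN_le σ hj) (Ne.symm hne)
  have := Finset.card_le_card hsub
  rw [Finset.card_erase_of_mem hmS, hcardS] at this
  omega

end Inst

section Uniq

variable [NeZero n] (pick : Finset (Fin n) → Fin n) (r : Fin n → Fin n → Prop)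
  (hpick : ∀ S : Finset (Fin n), S.Nonempty → pick S ∈ S)
  (hext : ∀ S : Finset (Fin n), ∀ v ∈ S, r (pick S) v)
  (hrefl : ∀ x : Fin n, r x x)
  (hanti : ∀ x y : Fin n, r x y → r y x → x = y)
  (σ : Equiv.Perm (Fin n))
  (hσ : ∀ a b c : Fin n, a < b → b < c → σ a < σ b → σ a < σ c → r (σ b) (σ c))

include hpick hext hrefl hanti hσ in
lemma gf_unique : ∀ i, (hi : i < n) → gf (pminN σ) pick i = σ ⟨i, hi⟩ := by
  intro i
  induction i using Nat.strong_induction_on with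
  | _ i IH =>
  intro hi
  by_cases h0 : i = 0
  · subst h0
    have hg : gf (pminN σ) pick 0 = pminN σ 0 := by simp [gf, step]
    rw [hg, pminN_zero]
  · by_cases hd : pminN σ i < pminN σ (i-1)
    · have hg : gf (pminN σ) pick i = pminN σ i := by simp [gf, step, h0, hd]
      have hrec := pminN_succ σ (by omega : 0 < i) hi
      rw [hg]
      rcases min_cases (pminN σ (i-1)) (σ ⟨i, hi⟩) with ⟨he, _⟩ | ⟨he, _⟩
      · exfalso; rw [hrec, he] at hd; exact lt_irrefl _ hd
      · rw [hrec, he]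
    · have heq : pminN σ i = pminN σ (i-1) :=
        le_antisymm (pminN_anti σ (by omega)) (not_lt.mp hd)
      obtain ⟨j, hj, hje⟩ := exists_pminN σ (i-1)
      have hji : (j : ℕ) < i := by omega
      have hlt : pminN σ i < σ ⟨i, hi⟩ := by
        rcases lt_or_eq_of_le (pminN_le σ (j := ⟨i, hi⟩) (le_refl i)) with h | h
        · exact h
        · exfalso
          have : σ j = σ ⟨i, hi⟩ := by rw [hje, ← heq]; exact h
          have := σ.injective this
          rw [this] at hji
          simp at hji
      have huse : ∀ v : Fin n, (v ∈ (buildL (pminN σ) pick i).toFinset ↔ ∃ k : ℕ, k < i ∧ ∃ hk : k < n, σ ⟨k, hk⟩ = v) := by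
        intro v
        rw [mem_buildL]
        constructor
        · rintro ⟨k, hk, hke⟩
          exact ⟨k, hk, by omega, by rw [← IH k hk (by omega)]; exact hke⟩
        · rintro ⟨k, hk, hkn, hke⟩
          exact ⟨k, hk, by rw [IH k hk hkn]; exact hke⟩
      have hmem : σ ⟨i, hi⟩ ∈ avail (pminN σ) i (buildL (pminN σ) pick i) := by
        rw [avail, Finset.mem_sdiff, Finset.mem_filter]
        refine ⟨⟨Finset.mem_univ _, hlt⟩, ?_⟩
        rw [huse]
        rintro ⟨k, hk, hkn, hke⟩
        have := σ.injective hke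
        have : k = i := by
          have := congrArg Fin.val this; simpa using this
        omega
      have hg : gf (pminN σ) pick i = pick (avail (pminN σ) i (buildL (pminN σ) pick i)) := by
        simp [gf, step, h0, hd]
      set v := pick (avail (pminN σ) i (buildL (pminN σ) pick i)) with hv
      have hvmem : v ∈ avail (pminN σ) i (buildL (pminN σ) pick i) := hpick _ ⟨_, hmem⟩
      have h1 : r v (σ ⟨i, hi⟩) := hext _ _ hmem
      have h2 : r (σ ⟨i, hi⟩) v := by
        rw [avail, Finset.mem_sdiff, Finset.mem_filter] at hvmem
        obtain ⟨⟨_, hvlt⟩, hvnot⟩ := hvmem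
        set k := σ.symm v with hk
        have hvk : σ k = v := σ.apply_symm_apply v
        have hknot : ¬ ((k : ℕ) < i) := by
          intro hki
          apply hvnot
          rw [huse]
          exact ⟨k, hki, k.isLt, by rw [Fin.eta]; exact hvk⟩
        rcases Nat.lt_or_ge i (k : ℕ) with hik | hik
        · have hjlt : j < (⟨i, hi⟩ : Fin n) := by rw [Fin.lt_def]; exact hji
          have hik' : (⟨i, hi⟩ : Fin n) < k := by rw [Fin.lt_def]; exact hik
          have hs1 : σ j < σ ⟨i, hi⟩ := by rw [hje, ← heq]; exact hlt
          have hs2 : σ j < σ k := by rw [hje, ← heq, hvk]; exact hvlt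
          have := hσ j ⟨i, hi⟩ k hjlt hik' hs1 hs2
          rw [hvk] at this
          exact this
        · have : (k : ℕ) = i := by omega
          have : k = ⟨i, hi⟩ := by ext; simp [this]
          rw [← hvk, this]
          exact hrefl _
      exact hg.trans (hanti _ _ h1 h2)
end Uniq


variable {n : ℕ}

section Assemble

variable [NeZero n]

noncomputable def minPick (S : Finset (Fin n)) : Fin n :=
  if h : S.Nonempty then S.min' h else ⟨0, Nat.pos_of_ne_zero (NeZero.ne n)⟩

noncomputable def maxPick (S : Finset (Fin n)) : Fin n :=
  if h : S.Nonempty then S.max' h else ⟨0, Nat.pos_of_ne_zero (NeZero.ne n)⟩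

lemma minPick_mem : ∀ S : Finset (Fin n), S.Nonempty → minPick S ∈ S := by
  intro S h; rw [minPick, dif_pos h]; exact S.min'_mem h

lemma maxPick_mem : ∀ S : Finset (Fin n), S.Nonempty → maxPick S ∈ S := by
  intro S h; rw [maxPick, dif_pos h]; exact S.max'_mem h

lemma minPick_le : ∀ S : Finset (Fin n), ∀ v ∈ S, minPick S ≤ v := by
  intro S v hv; rw [minPick, dif_pos ⟨v, hv⟩]; exact S.min'_le v hv

lemma le_maxPick : ∀ S : Finset (Fin n), ∀ v ∈ S, (fun x y => y ≤ x) (maxPick S) v := by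
  intro S v hv; rw [maxPick, dif_pos ⟨v, hv⟩]; exact S.le_max' v hv

variable (pick : Finset (Fin n) → Fin n)
  (hpick : ∀ S : Finset (Fin n), S.Nonempty → pick S ∈ S)

noncomputable def Gp (π : Equiv.Perm (Fin n)) : Equiv.Perm (Fin n) :=
  Equiv.ofBijective (fun x : Fin n => gf (pminN π) pick x.val)
    (Finite.injective_iff_bijective.mp (by
      intro x y he
      exact Fin.ext (gf_inj (pminN π) pick (pminN_hA π) (pminN_hC π) hpick x.isLt y.isLt he)))

lemma Gp_apply (π : Equiv.Perm (Fin n)) (x : Fin n) :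
    Gp pick hpick π x = gf (pminN π) pick x.val := rfl

include hpick in
lemma pminN_Gp (π : Equiv.Perm (Fin n)) : pminN (Gp pick hpick π) = pminN π := by
  have key : ∀ i, i < n → pminN (Gp pick hpick π) i = pminN π i := by
    intro i hi
    refine le_antisymm ?_ ?_
    · obtain ⟨j, hj, hje⟩ :=
        (main_inv (pminN π) pick (pminN_hA π) (pminN_hC π) hpick i hi).2.2
      have hjn : j < n := lt_of_le_of_lt hj hi
      calc pminN (Gp pick hpick π) i ≤ Gp pick hpick π ⟨j, hjn⟩ :=
            pminN_le _ (by simpa using hj)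
        _ = pminN π i := by rw [Gp_apply]; exact hje
    · obtain ⟨j, hj, hje⟩ := exists_pminN (Gp pick hpick π) i
      rw [← hje, Gp_apply]
      calc pminN π i ≤ pminN π (j : ℕ) := pminN_anti π hj
        _ ≤ gf (pminN π) pick (j : ℕ) :=
            (main_inv (pminN π) pick (pminN_hA π) (pminN_hC π) hpick (j : ℕ) j.isLt).1
  have hn : 0 < n := Nat.pos_of_ne_zero (NeZero.ne n)
  funext i
  rcases Nat.lt_or_ge i n with h | h
  · exact key i h
  · rw [pminN_stab _ (i := i) (by omega), pminN_stab π (i := i) (by omega),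
      key (n-1) (by omega)]

end Assemble


variable {n : ℕ}

section Final

variable [NeZero n]

lemma not_contains_132_G (π : Equiv.Perm (Fin n)) :
    ¬ Contains (Gp minPick minPick_mem π) (Equiv.swap (1 : Fin 3) 2) := by
  intro h
  obtain ⟨a, b, c, hab, hbc, h1, h2⟩ := triple_of_contains_132 h
  have hrel := rel_of (pminN π) minPick (· ≤ ·) (pminN_hA π) (pminN_hC π)
    minPick_mem minPick_le (Fin.lt_def.mp hab) (Fin.lt_def.mp hbc) c.isLt
    (show Gp minPick minPick_mem π a < Gp minPick minPick_mem π b from h1.trans h2) h1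
  exact absurd h2 (not_lt.mpr hrel)

lemma not_contains_123_G (π : Equiv.Perm (Fin n)) :
    ¬ Contains (Gp maxPick maxPick_mem π) (1 : Equiv.Perm (Fin 3)) := by
  intro h
  obtain ⟨a, b, c, hab, hbc, h1, h2⟩ := triple_of_contains_123 h
  have hrel := rel_of (pminN π) maxPick (fun x y => y ≤ x) (pminN_hA π) (pminN_hC π)
    maxPick_mem le_maxPick (Fin.lt_def.mp hab) (Fin.lt_def.mp hbc) c.isLt
    h1 (h1.trans h2)
  exact absurd h2 (not_lt.mpr hrel)

lemma hsigma_132 (σ : Equiv.Perm (Fin n)) (hav : ¬ Contains σ (Equiv.swap (1 : Fin 3) 2)) :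
    ∀ a b c : Fin n, a < b → b < c → σ a < σ b → σ a < σ c → σ b ≤ σ c := by
  intro a b c hab hbc h1 h2
  by_contra h
  exact hav (contains_of_132 σ hab hbc h2 (not_le.mp h))

lemma hsigma_123 (σ : Equiv.Perm (Fin n)) (hav : ¬ Contains σ (1 : Equiv.Perm (Fin 3))) :
    ∀ a b c : Fin n, a < b → b < c → σ a < σ b → σ a < σ c →
      (fun x y => y ≤ x) (σ b) (σ c) := by
  intro a b c hab hbc h1 h2
  by_contra h
  exact hav (contains_of_123 σ hab hbc h1 (not_le.mp (h : ¬ σ c ≤ σ b)))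

lemma Gp_eq_of_avoid132 (π σ : Equiv.Perm (Fin n)) (h : pminN σ = pminN π)
    (hav : ¬ Contains π (Equiv.swap (1 : Fin 3) 2)) :
    Gp minPick minPick_mem σ = π := by
  apply Equiv.ext; intro x
  rw [Gp_apply, h]
  have := gf_unique minPick (· ≤ ·) minPick_mem minPick_le (fun x => le_refl x)
    (fun x y h1 h2 => le_antisymm h1 h2) π (hsigma_132 π hav) x.val x.isLt
  simpa using this

lemma Gp_eq_of_avoid123 (π σ : Equiv.Perm (Fin n)) (h : pminN σ = pminN π)
    (hav : ¬ Contains π (1 : Equiv.Perm (Fin 3))) :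
    Gp maxPick maxPick_mem σ = π := by
  apply Equiv.ext; intro x
  rw [Gp_apply, h]
  have := gf_unique maxPick (fun x y => y ≤ x) maxPick_mem le_maxPick
    (fun x => le_refl x) (fun x y h1 h2 => le_antisymm h2 h1) π (hsigma_123 π hav)
    x.val x.isLt
  simpa using this

end Final

theorem card_avoiding_132_eq_card_avoiding_123 (n : ℕ) (hn : 1 ≤ n) :
    Nat.card {π : Equiv.Perm (Fin n) // ¬ Contains π (Equiv.swap (1 : Fin 3) 2)} =
    Nat.card {π : Equiv.Perm (Fin n) // ¬ Contains π (1 : Equiv.Perm (Fin 3))} := by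
  haveI : NeZero n := ⟨by omega⟩
  apply Nat.card_congr
  exact
    { toFun := fun p => ⟨Gp maxPick maxPick_mem p.1, not_contains_123_G p.1⟩
      invFun := fun p => ⟨Gp minPick minPick_mem p.1, not_contains_132_G p.1⟩
      left_inv := fun p =>
        Subtype.ext (Gp_eq_of_avoid132 p.1 _ (pminN_Gp maxPick maxPick_mem p.1) p.2)
      right_inv := fun p =>
        Subtype.ext (Gp_eq_of_avoid123 p.1 _ (pminN_Gp minPick minPick_mem p.1) p.2) }
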